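/- arXiv:2604.09340 — 2 statements merged into one kernel-verified Lean document; each statement's English description precedes it below -/
import Mathlib

section
/- For each k ∈ (1/2,1], there exists φ* ∈ Φ such that J_k(φ*) ≥ J_k(φ) for all φ ∈ Φ; that is, the upstream actor's reduced problem of maximizing J_k over Φ admits a solution. -/
open MeasureTheory Set Filter

namespace Screening

/-- Assumption 1 on the cost function. -/
structure Assumption1 (c : ℝ → ℝ) (Qbar qbar : ℝ) : Prop where
  contDiff2 : ContDiffOn ℝ 2 c (Set.Ioi 0)
  strictMono : StrictMonoOn c (Set.Ici 0)
  strictConvex : StrictConvexOn ℝ (Set.Ici 0) c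
  zero_val : c 0 = 0
  deriv_zero : derivWithin c (Set.Ici 0) 0 = 0
  Qbar_pos : 0 < Qbar
  second_deriv_pos : ∀ x ∈ Set.Ioc (0:ℝ) Qbar, 0 < deriv (deriv c) x
  qbar_pos : 0 < qbar
  qbar_lt_Qbar : qbar < Qbar
  deriv_qbar : deriv c qbar = 1

/-- Assumption 2 (curvature condition). -/
structure Assumption2 (c : ℝ → ℝ) (qbar : ℝ) : Prop where
  contDiff3 : ContDiffOn ℝ 3 c (Set.Ioi 0)
  curvature : ∀ x ∈ Set.Ioc (0:ℝ) qbar,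
    -x * deriv (deriv (deriv c)) x / deriv (deriv c) x < 2

/-- `q` is the (unique) pointwise maximizer of `x ↦ z·x − c x` over `[0, qbar]`. -/
def IsArgmaxSelection (c : ℝ → ℝ) (qbar : ℝ) (q : ℝ → ℝ) : Prop :=
  ∀ z : ℝ, q z ∈ Set.Icc (0:ℝ) qbar ∧
    ∀ x ∈ Set.Icc (0:ℝ) qbar, z * x - c x ≤ z * q z - c (q z)

/-- Indirect profit `π(z) = z·q(z) − c(q(z))`. -/
noncomputable def piFun (c q : ℝ → ℝ) (z : ℝ) : ℝ := z * q z - c (q z)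

/-- Membership in Φ: nondecreasing, `[0,1]`-valued, right-continuous on `[0,1)`. -/
def MemPhi (φ : ℝ → ℝ) : Prop :=
  (∀ u ∈ Set.Icc (0:ℝ) 1, φ u ∈ Set.Icc (0:ℝ) 1) ∧
  MonotoneOn φ (Set.Icc (0:ℝ) 1) ∧
  ∀ u ∈ Set.Ico (0:ℝ) 1, ContinuousWithinAt φ (Set.Ici u) u

/-- The induced quantile `Q_φ`. -/
noncomputable def Qfun (φ : ℝ → ℝ) (u : ℝ) : ℝ :=
  if u < 1 then (∫ t in u..1, φ t) / (1 - u)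
  else limUnder (nhdsWithin 1 (Set.Iio 1))
    (fun v => (∫ t in v..1, φ t) / (1 - v))

/-- Seller profit `Π(φ)`. -/
noncomputable def Profit (c q φ : ℝ → ℝ) : ℝ := ∫ u in (0:ℝ)..1, piFun c q (φ u)

/-- Consumer surplus `CS(φ)`. -/
noncomputable def CS (q φ : ℝ → ℝ) : ℝ :=
  ∫ u in (0:ℝ)..1, (Qfun φ u - φ u) * q (φ u)

/-- Weighted objective `J_k(φ)`. -/
noncomputable def Jfun (c q : ℝ → ℝ) (k : ℝ) (φ : ℝ → ℝ) : ℝ :=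
  k * CS q φ + (1 - k) * Profit c q φ

/-- Cumulative spillover `A_φ(u)`. -/
noncomputable def Afun (q φ : ℝ → ℝ) (u : ℝ) : ℝ :=
  ∫ s in (0:ℝ)..u, q (φ s) / (1 - s)

/-- `q'(z) = 1 / c''(q(z))`. -/
noncomputable def qprime (c q : ℝ → ℝ) (z : ℝ) : ℝ := (deriv (deriv c) (q z))⁻¹

/-- First-variation density `H_k[φ](u)`. -/
noncomputable def Hfun (c q : ℝ → ℝ) (k : ℝ) (φ : ℝ → ℝ) (u : ℝ) : ℝ :=
  k * Afun q φ u + k * (Qfun φ u - φ u) * qprime c q (φ u) + (1 - 2*k) * q (φ u)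

/-!
By strict convexity of `c` and Berge's maximum theorem the quantity rule `q`, hence also `π`, is
continuous. Dominated convergence then makes `J_k` continuous along sequences of monotone
`[0,1]`-valued functions converging almost everywhere. By Helly's selection theorem every sequence
in `Φ` has a subsequence converging at every continuity point, hence almost everywhere, to a
right-continuous monotone limit, which lies in `Φ` again. Applied to a maximizing sequence this
shows that `J_k` is bounded above on `Φ` and that its supremum is attained.
-/

open Topology

/-- Berge's maximum theorem, for a unique maximizer. -/
theorem continuous_of_isMaxOn_unique {Z X : Type*} [TopologicalSpace Z] [FirstCountableTopology Z]
    [TopologicalSpace X] [FirstCountableTopology X] {F : Z → X → ℝ} {K : Set X}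
    (hK : IsCompact K) (hF : ContinuousOn (Function.uncurry F) (univ ×ˢ K)) {q : Z → X}
    (hqK : ∀ z, q z ∈ K) (hmax : ∀ z, IsMaxOn (F z) K (q z))
    (huniq : ∀ z, ∀ x ∈ K, IsMaxOn (F z) K x → x = q z) : Continuous q := by
  refine continuous_iff_continuousAt.2 fun z => tendsto_nhds_iff_seq_tendsto.2 fun zs hzs =>
    tendsto_of_subseq_tendsto fun ns hns => ?_
  obtain ⟨L, hLK, ms, hms, hL⟩ := hK.tendsto_subseq fun n => hqK (zs (ns n))
  have hz : Tendsto (fun n => zs (ns (ms n))) atTop (𝓝 z) :=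
    hzs.comp (hns.comp hms.tendsto_atTop)
  have hFlim {xs : ℕ → X} {x : X} (hx : x ∈ K) (hxs : ∀ n, xs n ∈ K)
      (hlim : Tendsto xs atTop (𝓝 x)) :
      Tendsto (fun n => F (zs (ns (ms n))) (xs n)) atTop (𝓝 (F z x)) :=
    (hF (z, x) ⟨trivial, hx⟩).tendsto.comp <| tendsto_nhdsWithin_iff.2
      ⟨hz.prodMk_nhds hlim, Eventually.of_forall fun n => ⟨trivial, hxs n⟩⟩
  have hLmax : IsMaxOn (F z) K L := isMaxOn_iff.2 fun y hy =>
    le_of_tendsto_of_tendsto' (hFlim hy (fun _ => hy) tendsto_const_nhds)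
      (hFlim hLK (fun n => hqK _) hL) fun n => isMaxOn_iff.1 (hmax _) y hy
  exact ⟨ms, huniq z L hLK hLmax ▸ hL⟩

theorem exists_isMaxOn_of_exists_subseq_tendsto {α : Type*} {S : Set α} {f : α → ℝ}
    (hS : S.Nonempty)
    (h : ∀ x : ℕ → α, (∀ n, x n ∈ S) →
      ∃ y ∈ S, ∃ σ : ℕ → ℕ, StrictMono σ ∧ Tendsto (fun n => f (x (σ n))) atTop (𝓝 (f y))) :
    ∃ y ∈ S, IsMaxOn f S y := by
  have hbdd : BddAbove (f '' S) := by
    by_contra hunbdd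
    have hlarge (n : ℕ) : ∃ x ∈ S, (n : ℝ) < f x := by
      obtain ⟨_, ⟨x, hxS, rfl⟩, hlt⟩ := not_bddAbove_iff.1 hunbdd n
      exact ⟨x, hxS, hlt⟩
    choose x hxS hx using hlarge
    obtain ⟨y, -, σ, hσ, hlim⟩ := h x hxS
    exact not_tendsto_nhds_of_tendsto_atTop (tendsto_atTop_mono (fun n => (hx (σ n)).le)
      (tendsto_natCast_atTop_atTop.comp hσ.tendsto_atTop)) _ hlim
  obtain ⟨u, -, hu, huS⟩ := exists_seq_tendsto_sSup (hS.image f) hbdd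
  choose x hxS hx using huS
  obtain ⟨y, hyS, σ, hσ, hlim⟩ := h x hxS
  have hy : f y = sSup (f '' S) :=
    tendsto_nhds_unique hlim (by simpa only [hx, Function.comp_def] using hu.comp hσ.tendsto_atTop)
  exact ⟨y, hyS, isMaxOn_iff.2 fun z hz => hy ▸ le_csSup hbdd (mem_image_of_mem f hz)⟩

section Helly

theorem exists_subseq_tendsto_of_mem_Icc {ι : Type*} [Countable ι] {a b : ℝ}
    (f : ℕ → ι → ℝ) (hf : ∀ n i, f n i ∈ Icc a b) :
    ∃ g : ι → ℝ, ∃ σ : ℕ → ℕ, StrictMono σ ∧ ∀ i, Tendsto (fun n => f (σ n) i) atTop (𝓝 (g i)) := by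
  obtain ⟨g, -, σ, hσ, hg⟩ := (isCompact_univ (X := ι → Icc a b)).tendsto_subseq
    (x := fun n i => ⟨f n i, hf n i⟩) fun _ => mem_univ _
  exact ⟨fun i => g i, σ, hσ, fun i =>
    (continuous_subtype_val.tendsto _).comp (((continuous_apply i).tendsto g).comp hg)⟩

noncomputable def infRatGt (h : ℚ → ℝ) (x : ℝ) : ℝ := ⨅ r : {r : ℚ // x < r}, h r

variable {h : ℚ → ℝ} {a b : ℝ}

instance (x : ℝ) : Nonempty {r : ℚ // x < r} := nonempty_subtype.2 (exists_rat_gt x)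

lemma infRatGt_le (hab : ∀ r, h r ∈ Icc a b) {x : ℝ} {r : ℚ} (hxr : x < r) :
    infRatGt h x ≤ h r :=
  ciInf_le (f := fun s : {r : ℚ // x < r} => h s)
    ⟨a, forall_mem_range.2 fun s => (hab s).1⟩ ⟨r, hxr⟩

lemma le_infRatGt (hh : Monotone h) {x : ℝ} {r : ℚ} (hrx : (r : ℝ) ≤ x) :
    h r ≤ infRatGt h x :=
  le_ciInf fun s => hh (Rat.cast_le.1 (hrx.trans s.2.le))

lemma infRatGt_mem_Icc (hab : ∀ r, h r ∈ Icc a b) (x : ℝ) : infRatGt h x ∈ Icc a b :=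
  ⟨le_ciInf fun s => (hab s).1,
    (infRatGt_le hab (exists_rat_gt x).choose_spec).trans (hab _).2⟩

lemma monotone_infRatGt (hab : ∀ r, h r ∈ Icc a b) : Monotone (infRatGt h) :=
  fun _ _ hxy => le_ciInf fun s => infRatGt_le hab (hxy.trans_lt s.2)

lemma continuousWithinAt_infRatGt (hab : ∀ r, h r ∈ Icc a b) (x : ℝ) :
    ContinuousWithinAt (infRatGt h) (Ici x) x := by
  refine tendsto_order.2 ⟨fun m hm => eventually_nhdsWithin_of_forall fun y hy =>
    hm.trans_le (monotone_infRatGt hab hy), fun m hm => ?_⟩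
  obtain ⟨⟨r, hxr⟩, hr⟩ := exists_lt_of_ciInf_lt hm
  filter_upwards [Ico_mem_nhdsGE hxr] with y hy using (infRatGt_le hab hy.2).trans_lt hr

lemma tendsto_infRatGt {f : ℕ → ℝ → ℝ} (hf : ∀ n, Monotone (f n)) (hh : Monotone h)
    (hab : ∀ r, h r ∈ Icc a b) (hlim : ∀ r : ℚ, Tendsto (fun n => f n r) atTop (𝓝 (h r)))
    {x : ℝ} (hx : ContinuousAt (infRatGt h) x) :
    Tendsto (fun n => f n x) atTop (𝓝 (infRatGt h x)) := by
  refine tendsto_order.2 ⟨fun m hm => ?_, fun m hm => ?_⟩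
  · obtain ⟨y, hyx, hmy⟩ := (hx.eventually (lt_mem_nhds hm)).exists_lt
    obtain ⟨r, hyr, hrx⟩ := exists_rat_btwn hyx
    filter_upwards [(hlim r).eventually (lt_mem_nhds (hmy.trans_le (infRatGt_le hab hyr)))]
      with n hn using hn.trans_le (hf n hrx.le)
  · obtain ⟨y, hxy, hmy⟩ := (hx.eventually (gt_mem_nhds hm)).exists_gt
    obtain ⟨r, hxr, hry⟩ := exists_rat_btwn hxy
    filter_upwards [(hlim r).eventually (gt_mem_nhds ((le_infRatGt hh hry.le).trans_lt hmy))]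
      with n hn using (hf n hxr.le).trans_lt hn

/-- Helly's selection theorem. -/
theorem exists_subseq_tendsto_of_monotone (f : ℕ → ℝ → ℝ) (hf : ∀ n, Monotone (f n))
    (hab : ∀ n x, f n x ∈ Icc a b) :
    ∃ g : ℝ → ℝ, Monotone g ∧ (∀ x, g x ∈ Icc a b) ∧ (∀ x, ContinuousWithinAt g (Ici x) x) ∧
      ∃ σ : ℕ → ℕ, StrictMono σ ∧
        ∀ x, ContinuousAt g x → Tendsto (fun n => f (σ n) x) atTop (𝓝 (g x)) := by
  obtain ⟨h, σ, hσ, hlim⟩ := exists_subseq_tendsto_of_mem_Icc (fun n (r : ℚ) => f n r)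
    fun n r => hab n r
  have hh : Monotone h := fun r s hrs => le_of_tendsto_of_tendsto' (hlim r) (hlim s)
    fun n => hf _ (Rat.cast_le.2 hrs)
  have hhab : ∀ r, h r ∈ Icc a b := fun r =>
    isClosed_Icc.mem_of_tendsto (hlim r) (Eventually.of_forall fun n => hab _ _)
  exact ⟨infRatGt h, monotone_infRatGt hhab, infRatGt_mem_Icc hhab,
    continuousWithinAt_infRatGt hhab, σ, hσ,
    fun x hx => tendsto_infRatGt (fun n => hf (σ n)) hh hhab hlim hx⟩

end Helly

section Cost

variable {c : ℝ → ℝ} {Qbar qbar : ℝ} {q : ℝ → ℝ}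

lemma Assumption1.le_mul_of_mem_Icc (hA1 : Assumption1 c Qbar qbar) {y : ℝ}
    (hy : y ∈ Icc 0 qbar) : c y ≤ y / qbar * c qbar := by
  have hqbar := hA1.qbar_pos
  have := hA1.strictConvex.convexOn.2 (mem_Ici.2 le_rfl) (mem_Ici.2 hqbar.le)
    (sub_nonneg.2 ((div_le_one hqbar).2 hy.2)) (div_nonneg hy.1 hqbar.le) (sub_add_cancel 1 _)
  simpa [hA1.zero_val, div_mul_cancel₀ y hqbar.ne'] using this

lemma Assumption1.continuousOn_Icc (hA1 : Assumption1 c Qbar qbar) :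
    ContinuousOn c (Icc 0 qbar) := by
  intro x hx
  rcases hx.1.eq_or_lt with rfl | hx0
  -- at the endpoint `0`, `c` is squeezed between `c 0 = 0` and the chord to `qbar`
  · have hlin : Tendsto (fun y => y / qbar * c qbar) (𝓝[Icc 0 qbar] 0) (𝓝 0) :=
      tendsto_nhdsWithin_of_tendsto_nhds <| by
        simpa using ((continuous_id.div_const qbar).mul_const (c qbar)).tendsto 0
    rw [ContinuousWithinAt, hA1.zero_val]
    refine squeeze_zero' (eventually_nhdsWithin_of_forall fun y hy => ?_)
      (eventually_nhdsWithin_of_forall fun y hy => hA1.le_mul_of_mem_Icc hy) hlin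
    rw [← hA1.zero_val]
    exact hA1.strictMono.monotoneOn (mem_Ici.2 le_rfl) (mem_Ici.2 hy.1) hy.1
  · exact (hA1.contDiff2.continuousOn.continuousAt (Ioi_mem_nhds hx0)).continuousWithinAt

lemma Assumption1.strictConcaveOn_sub (hA1 : Assumption1 c Qbar qbar) (z : ℝ) :
    StrictConcaveOn ℝ (Icc 0 qbar) (fun x => z * x - c x) :=
  (LinearMap.mulLeft ℝ z).concaveOn (convex_Icc 0 qbar) |>.add_strictConcaveOn
    (hA1.strictConvex.subset Icc_subset_Ici_self (convex_Icc 0 qbar)).neg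

lemma IsArgmaxSelection.continuous (hA1 : Assumption1 c Qbar qbar)
    (hq : IsArgmaxSelection c qbar q) : Continuous q := by
  have hmax (z : ℝ) : IsMaxOn (fun x => z * x - c x) (Icc 0 qbar) (q z) :=
    isMaxOn_iff.2 (hq z).2
  refine continuous_of_isMaxOn_unique isCompact_Icc ?_ (fun z => (hq z).1) hmax
    fun z x hx hx_max => (hA1.strictConcaveOn_sub z).eq_of_isMaxOn hx_max (hmax z) hx (hq z).1
  exact (continuous_fst.mul continuous_snd).continuousOn.sub
    (hA1.continuousOn_Icc.comp continuous_snd.continuousOn fun p hp => hp.2)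

lemma IsArgmaxSelection.continuous_piFun (hA1 : Assumption1 c Qbar qbar)
    (hq : IsArgmaxSelection c qbar q) : Continuous (piFun c q) :=
  have hqc := hq.continuous hA1
  (continuous_id.mul hqc).sub (hA1.continuousOn_Icc.comp_continuous hqc fun z => (hq z).1)

lemma IsArgmaxSelection.abs_le (hq : IsArgmaxSelection c qbar q) (z : ℝ) : |q z| ≤ qbar :=
  (abs_of_nonneg (hq z).1.1).trans_le (hq z).1.2

end Cost

section Continuity

variable {ψ : ℝ → ℝ} {ψs : ℕ → ℝ → ℝ}

lemma intervalIntegrable_of_mem_Icc (hψ : Measurable ψ) (h01 : ∀ t, ψ t ∈ Icc (0 : ℝ) 1)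
    (a b : ℝ) : IntervalIntegrable ψ volume a b :=
  intervalIntegrable_const.mono_fun' hψ.aestronglyMeasurable <| Eventually.of_forall fun t =>
    (Real.norm_of_nonneg (h01 t).1).trans_le (h01 t).2

lemma ae_mem_Ioo_of_mem_uIoc : ∀ᵐ u : ℝ, u ∈ uIoc 0 1 → u ∈ Ioo 0 1 := by
  filter_upwards [volume.ae_ne 1] with u hu1 hu
  rw [uIoc_of_le zero_le_one] at hu
  exact ⟨hu.1, hu.2.lt_of_ne hu1⟩

lemma Qfun_of_lt {u : ℝ} (hu : u < 1) : Qfun ψ u = (∫ t in u..1, ψ t) / (1 - u) := if_pos hu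

lemma Qfun_mem_Icc (hψ : Measurable ψ) (h01 : ∀ t, ψ t ∈ Icc (0 : ℝ) 1) {u : ℝ} (hu : u < 1) :
    Qfun ψ u ∈ Icc 0 1 := by
  have hpos : 0 < 1 - u := sub_pos.2 hu
  rw [Qfun_of_lt hu]
  refine ⟨div_nonneg (intervalIntegral.integral_nonneg hu.le fun t _ => (h01 t).1) hpos.le,
    (div_le_one hpos).2 ?_⟩
  simpa using intervalIntegral.integral_mono_on hu.le (intervalIntegrable_of_mem_Icc hψ h01 u 1)
    intervalIntegrable_const fun t _ => (h01 t).2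

lemma measurable_Qfun (hψ : Measurable ψ) (h01 : ∀ t, ψ t ∈ Icc (0 : ℝ) 1) :
    Measurable (Qfun ψ) := by
  have hint : Continuous fun u => ∫ t in u..1, ψ t :=
    (intervalIntegral.continuous_primitive (intervalIntegrable_of_mem_Icc hψ h01) 1).neg.congr
      fun u => (intervalIntegral.integral_symm 1 u).symm
  exact Measurable.ite measurableSet_Iio (hint.measurable.div (measurable_const.sub measurable_id))
    measurable_const

variable (hψs : ∀ n, Measurable (ψs n)) (h01s : ∀ n t, ψs n t ∈ Icc (0 : ℝ) 1)
  (hlim : ∀ᵐ t, Tendsto (fun n => ψs n t) atTop (𝓝 (ψ t)))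
include hψs h01s hlim

lemma tendsto_Qfun {u : ℝ} (hu : u < 1) :
    Tendsto (fun n => Qfun (ψs n) u) atTop (𝓝 (Qfun ψ u)) := by
  simp only [Qfun_of_lt hu]
  refine Tendsto.div_const ?_ _
  refine intervalIntegral.tendsto_integral_filter_of_dominated_convergence (fun _ => 1)
    (Eventually.of_forall fun n => (hψs n).aestronglyMeasurable)
    (Eventually.of_forall fun n => Eventually.of_forall fun t _ => ?_)
    intervalIntegrable_const (hlim.mono fun t ht _ => ht)
  exact (Real.norm_of_nonneg (h01s n t).1).trans_le (h01s n t).2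

lemma tendsto_integral_comp {F : ℝ → ℝ} (hF : Continuous F) (a b : ℝ) :
    Tendsto (fun n => ∫ u in a..b, F (ψs n u)) atTop (𝓝 (∫ u in a..b, F (ψ u))) := by
  obtain ⟨C, hC⟩ := (isCompact_Icc (a := 0) (b := 1)).exists_bound_of_continuousOn hF.continuousOn
  exact intervalIntegral.tendsto_integral_filter_of_dominated_convergence (fun _ => C)
    (Eventually.of_forall fun n => (hF.measurable.comp (hψs n)).aestronglyMeasurable)
    (Eventually.of_forall fun n => Eventually.of_forall fun u _ => hC _ (h01s n u))
    intervalIntegrable_const (hlim.mono fun u hu _ => (hF.tendsto _).comp hu)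

lemma tendsto_CS {q : ℝ → ℝ} {C : ℝ}
    (hq : Continuous q) (hqC : ∀ z, |q z| ≤ C) :
    Tendsto (fun n => CS q (ψs n)) atTop (𝓝 (CS q ψ)) := by
  refine intervalIntegral.tendsto_integral_filter_of_dominated_convergence (fun _ => C)
    (Eventually.of_forall fun n => (((measurable_Qfun (hψs n) (h01s n)).sub (hψs n)).mul
      (hq.measurable.comp (hψs n))).aestronglyMeasurable)
    (Eventually.of_forall fun n => ?_) intervalIntegrable_const ?_
  · filter_upwards [ae_mem_Ioo_of_mem_uIoc] with u hu hu_mem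
    have hQ := Qfun_mem_Icc (hψs n) (h01s n) (hu hu_mem).2
    have hdiff : |Qfun (ψs n) u - ψs n u| ≤ 1 :=
      abs_sub_le_iff.2 ⟨by linarith [hQ.2, (h01s n u).1], by linarith [hQ.1, (h01s n u).2]⟩
    rw [Real.norm_eq_abs, abs_mul]
    exact (mul_le_of_le_one_left (abs_nonneg _) hdiff).trans (hqC _)
  · filter_upwards [ae_mem_Ioo_of_mem_uIoc, hlim] with u hu hu_lim hu_mem
    exact ((tendsto_Qfun hψs h01s hlim (hu hu_mem).2).sub hu_lim).mul ((hq.tendsto _).comp hu_lim)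

lemma tendsto_Jfun {c q : ℝ → ℝ} {C : ℝ} (hq : Continuous q) (hqC : ∀ z, |q z| ≤ C)
    (hpi : Continuous (piFun c q)) (k : ℝ) :
    Tendsto (fun n => Jfun c q k (ψs n)) atTop (𝓝 (Jfun c q k ψ)) :=
  ((tendsto_CS hψs h01s hlim hq hqC).const_mul k).add
    ((tendsto_integral_comp hψs h01s hlim hpi 0 1).const_mul (1 - k))

end Continuity

lemma MemPhi.exists_monotone_extension {φ : ℝ → ℝ} (hφ : MemPhi φ) :
    ∃ ψ : ℝ → ℝ, Monotone ψ ∧ (∀ t, ψ t ∈ Icc (0 : ℝ) 1) ∧ EqOn φ ψ (Icc 0 1) :=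
  ⟨fun t => φ (projIcc 0 1 zero_le_one t),
    fun _ _ hst => hφ.2.1 (projIcc 0 1 _ _).2 (projIcc 0 1 _ _).2 (monotone_projIcc _ hst),
    fun t => hφ.1 _ (projIcc 0 1 _ t).2,
    fun t ht => by simp only [projIcc_of_mem _ ht]⟩

lemma Jfun_congr {c q φ ψ : ℝ → ℝ} (k : ℝ) (h : EqOn φ ψ (Icc 0 1)) :
    Jfun c q k φ = Jfun c q k ψ := by
  have hCS : CS q φ = CS q ψ := by
    refine intervalIntegral.integral_congr_ae ?_
    filter_upwards [ae_mem_Ioo_of_mem_uIoc] with u hu hu_mem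
    obtain ⟨hu0, hu1⟩ := hu hu_mem
    have hint : ∫ t in u..1, φ t = ∫ t in u..1, ψ t :=
      intervalIntegral.integral_congr fun t ht => h <|
        Icc_subset_Icc hu0.le le_rfl (uIcc_of_le hu1.le ▸ ht)
    rw [Qfun_of_lt hu1, Qfun_of_lt hu1, hint, h ⟨hu0.le, hu1.le⟩]
  have hProfit : Profit c q φ = Profit c q ψ :=
    intervalIntegral.integral_congr fun u hu => by
      rw [uIcc_of_le zero_le_one] at hu
      rw [h hu]
  rw [Jfun, Jfun, hCS, hProfit]

lemma exists_subseq_tendsto_Jfun {c : ℝ → ℝ} {Qbar qbar : ℝ} {q : ℝ → ℝ}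
    (hA1 : Assumption1 c Qbar qbar) (hq : IsArgmaxSelection c qbar q) (k : ℝ)
    (φs : ℕ → ℝ → ℝ) (hφs : ∀ n, MemPhi (φs n)) :
    ∃ g, MemPhi g ∧ ∃ σ : ℕ → ℕ, StrictMono σ ∧
      Tendsto (fun n => Jfun c q k (φs (σ n))) atTop (𝓝 (Jfun c q k g)) := by
  choose ψs hψs_mono hψs01 hψs_eq using fun n => (hφs n).exists_monotone_extension
  obtain ⟨g, hg_mono, hg01, hg_right, σ, hσ, hlim⟩ :=
    exists_subseq_tendsto_of_monotone ψs hψs_mono hψs01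
  have hae : ∀ᵐ t, Tendsto (fun n => ψs (σ n) t) atTop (𝓝 (g t)) := by
    filter_upwards [measure_eq_zero_iff_ae_notMem.1
      (hg_mono.countable_not_continuousAt.measure_zero volume)] with t ht
    exact hlim t (not_not.1 ht)
  refine ⟨g, ⟨fun u _ => hg01 u, hg_mono.monotoneOn _, fun u _ => hg_right u⟩, σ, hσ, ?_⟩
  simp only [Jfun_congr k (hψs_eq _)]
  exact tendsto_Jfun (fun n => (hψs_mono (σ n)).measurable) (fun n => hψs01 (σ n)) hae
    (hq.continuous hA1) hq.abs_le (hq.continuous_piFun hA1) k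

theorem maximizer_exists_general
    (c : ℝ → ℝ) (Qbar qbar : ℝ) (q : ℝ → ℝ)
    (hA1 : Assumption1 c Qbar qbar)
    (hq : IsArgmaxSelection c qbar q)
    (k : ℝ) :
    ∃ φstar : ℝ → ℝ, MemPhi φstar ∧
      ∀ φ : ℝ → ℝ, MemPhi φ → Jfun c q k φ ≤ Jfun c q k φstar := by
  have hPhi_nonempty : {φ | MemPhi φ}.Nonempty :=
    ⟨fun _ => 0, fun _ _ => ⟨le_rfl, zero_le_one⟩, monotoneOn_const,
      fun _ _ => continuousWithinAt_const⟩
  obtain ⟨φstar, hφstar, hmax⟩ := exists_isMaxOn_of_exists_subseq_tendsto hPhi_nonempty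
    (exists_subseq_tendsto_Jfun hA1 hq k)
  exact ⟨φstar, hφstar, isMaxOn_iff.1 hmax⟩

/-- For each `k ∈ (1/2,1]`, the upstream actor's reduced problem of
maximizing `J_k` over `Φ` admits a solution. -/
theorem maximizer_exists
    (c : ℝ → ℝ) (Qbar qbar : ℝ) (q : ℝ → ℝ)
    (hA1 : Assumption1 c Qbar qbar)
    (hq : IsArgmaxSelection c qbar q)
    (k : ℝ) (hk : k ∈ Set.Ioc (1/2 : ℝ) 1) :
    ∃ φstar : ℝ → ℝ, MemPhi φstar ∧
      ∀ φ : ℝ → ℝ, MemPhi φ → Jfun c q k φ ≤ Jfun c q k φstar :=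
  maximizer_exists_general c Qbar qbar q hA1 hq k

end Screening
end

section
/- Fix k ∈ (1/2,1]. Under Assumptions 1 and 2, let φ* be a maximizer of J_k over Φ with cutoff b ∈ (0,1) (i.e. φ*(u) = 1 for all u ∈ [b,1]). Then φ*(0) > 0. -/
/-!
Suppose `φ 0 = 0` and raise the floor of `φ` to a small level `ε`, i.e. pass to `ψ = max φ ε`.
Where `z = φ u < ε`, consumer surplus gains at least `k (Q_φ(u) - ε) (q ε - q z)` with
`Q_φ ≥ 1 - b`, while by the envelope inequality `π ε - π z ≥ (ε - z) q z` the remaining loss is at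
most `(2k - 1) (ε - z) q z`. Writing `ε = c'(s)`, the curvature condition makes `t ↦ t² c''(t)`
increasing, hence `ξ c''(ξ) ≤ 4 c'(2ξ)`, and the mean value theorem turns this into
`(ε - z) q z ≤ 4 c'(2s) (q ε - q z)`. Since `c'(0+) = 0`, a small `s` lets the gain win, and
right-continuity of `φ` at `0` makes the gain strictly positive on an interval, so `J_k ψ > J_k φ`.
-/

open MeasureTheory Set Filter

namespace Screening

open Topology

section

variable {c q : ℝ → ℝ} {Qbar qbar : ℝ} {φ ψ : ℝ → ℝ}

theorem Assumption1.differentiableAt (hA1 : Assumption1 c Qbar qbar) {x : ℝ} (hx : 0 < x) :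
    DifferentiableAt ℝ c x :=
  (hA1.contDiff2.differentiableOn (by norm_num)).differentiableAt (Ioi_mem_nhds hx)

theorem Assumption1.hasDerivAt_deriv (hA1 : Assumption1 c Qbar qbar) {x : ℝ} (hx : 0 < x) :
    HasDerivAt (deriv c) (deriv (deriv c) x) x :=
  (((hA1.contDiff2.deriv_of_isOpen isOpen_Ioi (m := 1) (by norm_num)).differentiableOn
    (by norm_num)).differentiableAt (Ioi_mem_nhds hx)).hasDerivAt

theorem Assumption1.apply_pos (hA1 : Assumption1 c Qbar qbar) {x : ℝ} (hx : 0 < x) : 0 < c x :=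
  hA1.zero_val ▸ hA1.strictMono self_mem_Ici hx.le hx

theorem Assumption1.deriv_pos (hA1 : Assumption1 c Qbar qbar) {x : ℝ} (hx : 0 < x) :
    0 < deriv c x := by
  have hslope := hA1.strictConvex.convexOn.slope_le_deriv self_mem_Ici hx.le hx
    (hA1.differentiableAt hx)
  rw [slope_def_field, hA1.zero_val, sub_zero, sub_zero] at hslope
  exact (div_pos (hA1.apply_pos hx) hx).trans_le hslope

theorem Assumption1.strictMonoOn_deriv (hA1 : Assumption1 c Qbar qbar) :
    StrictMonoOn (deriv c) (Ioi 0) :=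
  (hA1.strictConvex.subset Ioi_subset_Ici_self (convex_Ioi 0)).strictMonoOn_deriv
    fun _ hx => hA1.differentiableAt hx

theorem Assumption1.tendsto_slope_zero (hA1 : Assumption1 c Qbar qbar) :
    Tendsto (slope c 0) (𝓝[>] 0) (𝓝 0) := by
  have hmono : MonotoneOn (slope c 0) (Ioo 0 1) :=
    (hA1.strictConvex.convexOn.monotoneOn_slope_gt self_mem_Ici).mono
      fun y hy => ⟨mem_Ici.mpr hy.1.le, hy.1⟩
  have hbdd : BddBelow (slope c 0 '' Ioo 0 1) := by
    refine ⟨0, ?_⟩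
    rintro _ ⟨y, hy, rfl⟩
    rw [slope_def_field, hA1.zero_val, sub_zero, sub_zero]
    exact (div_pos (hA1.apply_pos hy.1) hy.1).le
  have hlim := hmono.tendsto_nhdsWithin_Ioo_right ⟨1/2, by norm_num⟩ hbdd
  -- The monotone limit of the slopes is a one-sided derivative, so it is the given `c'(0) = 0`.
  have hderiv : HasDerivWithinAt c (sInf (slope c 0 '' Ioo 0 1)) (Ici 0) 0 := by
    refine HasDerivWithinAt.Ici_of_Ioi ?_
    rw [hasDerivWithinAt_iff_tendsto_slope]
    simpa only [mem_Ioi, lt_self_iff_false, not_false_eq_true, sdiff_singleton_eq_self]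
      using hlim
  rwa [(hderiv.derivWithin (uniqueDiffOn_Ici 0 0 self_mem_Ici)).symm.trans hA1.deriv_zero]
    at hlim

theorem Assumption1.tendsto_deriv_zero (hA1 : Assumption1 c Qbar qbar) :
    Tendsto (deriv c) (𝓝[>] 0) (𝓝 0) := by
  have hdouble : Tendsto (fun t : ℝ => 2 * t) (𝓝[>] 0) (𝓝[>] 0) :=
    tendsto_nhdsWithin_of_tendsto_nhds_of_eventually_within _
      (by simpa using ((continuous_const_mul (2:ℝ)).tendsto 0).mono_left nhdsWithin_le_nhds)
      (eventually_mem_nhdsWithin.mono fun t (ht : 0 < t) => by simp only [mem_Ioi]; linarith)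
  have hupper : Tendsto (fun t => 2 * slope c 0 (2 * t)) (𝓝[>] 0) (𝓝 0) := by
    simpa using (hA1.tendsto_slope_zero.comp hdouble).const_mul 2
  refine tendsto_of_tendsto_of_tendsto_of_le_of_le' tendsto_const_nhds hupper ?_ ?_
  · filter_upwards [self_mem_nhdsWithin] with t ht using (hA1.deriv_pos ht).le
  · filter_upwards [self_mem_nhdsWithin] with t (ht : 0 < t)
    calc deriv c t ≤ slope c t (2 * t) :=
          hA1.strictConvex.convexOn.deriv_le_slope ht.le (by simp only [mem_Ici]; linarith)
            (by linarith) (hA1.differentiableAt ht)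
      _ ≤ 2 * slope c 0 (2 * t) := by
          rw [slope_def_field, slope_def_field, hA1.zero_val, sub_zero, sub_zero,
            show 2 * t - t = t by ring, show 2 * (c (2 * t) / (2 * t)) = c (2 * t) / t by
              field_simp]
          gcongr
          linarith [hA1.apply_pos ht]

theorem Assumption1.deriv_mul_sub_lt (hA1 : Assumption1 c Qbar qbar) {s x : ℝ} (hs : 0 < s)
    (hx : 0 ≤ x) (hxs : x ≠ s) : deriv c s * x - c x < deriv c s * s - c s := by
  rcases hxs.lt_or_gt with hlt | hgt
  · have h := hA1.strictConvex.slope_lt_deriv hx hs.le hlt (hA1.differentiableAt hs)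
    rw [slope_def_field, div_lt_iff₀ (sub_pos.mpr hlt)] at h
    linarith
  · have h := hA1.strictConvex.deriv_lt_slope hs.le hx hgt (hA1.differentiableAt hs)
    rw [slope_def_field, lt_div_iff₀ (sub_pos.mpr hgt)] at h
    linarith

theorem Assumption2.hasDerivAt_deriv_deriv (hA2 : Assumption2 c qbar) {x : ℝ} (hx : 0 < x) :
    HasDerivAt (deriv (deriv c)) (deriv (deriv (deriv c)) x) x :=
  ((((hA2.contDiff3.deriv_of_isOpen isOpen_Ioi (m := 2) (by norm_num)).deriv_of_isOpen isOpen_Ioi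
    (m := 1) (by norm_num)).differentiableOn (by norm_num)).differentiableAt
    (Ioi_mem_nhds hx)).hasDerivAt

theorem Assumption2.strictMonoOn_sq_mul_deriv_deriv (hA1 : Assumption1 c Qbar qbar)
    (hA2 : Assumption2 c qbar) :
    StrictMonoOn (fun t => t ^ 2 * deriv (deriv c) t) (Ioc 0 qbar) := by
  refine strictMonoOn_of_deriv_pos (convex_Ioc _ _) ((continuousOn_pow 2).mul
    fun x hx => (hA2.hasDerivAt_deriv_deriv hx.1).continuousAt.continuousWithinAt) ?_
  intro x hx
  rw [interior_Ioc] at hx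
  have hderiv : HasDerivAt (fun t => t ^ 2 * deriv (deriv c) t)
      (↑2 * x ^ (2 - 1) * deriv (deriv c) x + x ^ 2 * deriv (deriv (deriv c)) x) x :=
    (hasDerivAt_pow 2 x).mul (hA2.hasDerivAt_deriv_deriv hx.1)
  rw [hderiv.deriv]
  have hc2 : 0 < deriv (deriv c) x :=
    hA1.second_deriv_pos x ⟨hx.1, hx.2.le.trans hA1.qbar_lt_Qbar.le⟩
  have hcurv := hA2.curvature x ⟨hx.1, hx.2.le⟩
  rw [div_lt_iff₀ hc2] at hcurv
  push_cast
  nlinarith [hx.1]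

theorem Assumption2.mul_deriv_deriv_le (hA1 : Assumption1 c Qbar qbar) (hA2 : Assumption2 c qbar)
    {ξ : ℝ} (hξ : 0 < ξ) (h2ξ : 2 * ξ ≤ qbar) :
    ξ * deriv (deriv c) ξ ≤ 4 * deriv c (2 * ξ) := by
  obtain ⟨η, hη, hmvt⟩ := exists_hasDerivAt_eq_slope (deriv c) (deriv (deriv c))
    (by linarith : ξ < 2 * ξ)
    (fun x hx => (hA1.hasDerivAt_deriv (hξ.trans_le hx.1)).continuousAt.continuousWithinAt)
    (fun x hx => hA1.hasDerivAt_deriv (hξ.trans hx.1))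
  rw [show 2 * ξ - ξ = ξ by ring, eq_div_iff hξ.ne'] at hmvt
  have hG : ξ ^ 2 * deriv (deriv c) ξ ≤ η ^ 2 * deriv (deriv c) η :=
    (hA2.strictMonoOn_sq_mul_deriv_deriv hA1).monotoneOn ⟨hξ, by linarith⟩
      ⟨hξ.trans hη.1, by linarith [hη.2]⟩ hη.1.le
  have hc2η : 0 < deriv (deriv c) η := hA1.second_deriv_pos η
    ⟨hξ.trans hη.1, by linarith [hη.2, hA1.qbar_lt_Qbar]⟩
  have hη2 : η ^ 2 ≤ 4 * ξ ^ 2 := by nlinarith [hη.1, hη.2]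
  have hc2ξ : deriv (deriv c) ξ ≤ 4 * deriv (deriv c) η := by
    have := mul_le_mul_of_nonneg_right hη2 hc2η.le
    nlinarith [pow_pos hξ 2]
  nlinarith [hA1.deriv_pos hξ]

namespace IsArgmaxSelection

theorem monotone (hq : IsArgmaxSelection c qbar q) : Monotone q := by
  intro z z' hzz'
  by_contra! h
  rcases hzz'.eq_or_lt with rfl | hlt
  · exact h.false
  nlinarith [(hq z).2 _ (hq z').1, (hq z').2 _ (hq z).1,
    mul_pos (sub_pos.mpr hlt) (sub_pos.mpr h)]

theorem sub_mul_le_piFun_sub (hq : IsArgmaxSelection c qbar q) (z z' : ℝ) :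
    (z' - z) * q z ≤ piFun c q z' - piFun c q z := by
  have := (hq z').2 (q z) (hq z).1
  unfold piFun
  linarith

theorem monotone_piFun (hq : IsArgmaxSelection c qbar q) : Monotone (piFun c q) :=
  fun z z' hzz' => sub_nonneg.mp <|
    (mul_nonneg (sub_nonneg.mpr hzz') (hq z).1.1).trans (hq.sub_mul_le_piFun_sub z z')

theorem deriv_apply (hA1 : Assumption1 c Qbar qbar) (hq : IsArgmaxSelection c qbar q) {z : ℝ}
    (h0 : 0 < q z) (hqbar : q z < qbar) : deriv c (q z) = z := by
  have hmax : IsLocalMax (fun x => z * x - c x) (q z) :=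
    IsMaxOn.isLocalMax (fun x hx => (hq z).2 x hx) (Icc_mem_nhds h0 hqbar)
  have hlin : HasDerivAt (fun x => z * x) z (q z) := by
    simpa using (hasDerivAt_id' (q z)).const_mul z
  have hderiv := hlin.sub (hA1.differentiableAt h0).hasDerivAt
  linarith [hmax.hasDerivAt_eq_zero hderiv]

theorem apply_deriv (hA1 : Assumption1 c Qbar qbar) (hq : IsArgmaxSelection c qbar q) {s : ℝ}
    (hs : 0 < s) (hsq : s ≤ qbar) : q (deriv c s) = s := by
  by_contra hne
  have hle := (hq (deriv c s)).2 s ⟨hs.le, hsq⟩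
  linarith [hA1.deriv_mul_sub_lt hs (hq (deriv c s)).1.1 hne]

theorem lt_of_lt_deriv (hA1 : Assumption1 c Qbar qbar) (hq : IsArgmaxSelection c qbar q)
    {s z : ℝ} (hs : 0 < s) (hsq : s < qbar) (hz : z < deriv c s) : q z < s := by
  have hle : q z ≤ s := hq.apply_deriv hA1 hs hsq.le ▸ hq.monotone hz.le
  refine hle.lt_of_ne fun heq => hz.ne ?_
  rw [← heq, hq.deriv_apply hA1 (heq ▸ hs) (heq ▸ hsq)]

theorem sub_mul_le_of_lt_deriv (hA1 : Assumption1 c Qbar qbar) (hA2 : Assumption2 c qbar)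
    (hq : IsArgmaxSelection c qbar q) {s z : ℝ} (hs : 0 < s) (h2s : 2 * s ≤ qbar)
    (hz : z < deriv c s) : (deriv c s - z) * q z ≤ 4 * deriv c (2 * s) * (s - q z) := by
  have hts : q z < s := hq.lt_of_lt_deriv hA1 hs (by linarith) hz
  have hB : 0 ≤ 4 * deriv c (2 * s) := by linarith [hA1.deriv_pos (by linarith : 0 < 2 * s)]
  rcases (hq z).1.1.eq_or_lt with h0 | ht
  · rw [← h0, mul_zero, sub_zero]
    exact mul_nonneg hB hs.le
  obtain ⟨ξ, hξ, hmvt⟩ := exists_hasDerivAt_eq_slope (deriv c) (deriv (deriv c)) hts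
    (fun x hx => (hA1.hasDerivAt_deriv (ht.trans_le hx.1)).continuousAt.continuousWithinAt)
    (fun x hx => hA1.hasDerivAt_deriv (ht.trans hx.1))
  rw [hq.deriv_apply hA1 ht (by linarith), eq_div_iff (sub_pos.mpr hts).ne'] at hmvt
  have hξ0 : 0 < ξ := ht.trans hξ.1
  have hc2 : 0 < deriv (deriv c) ξ :=
    hA1.second_deriv_pos ξ ⟨hξ0, by linarith [hξ.2, hA1.qbar_lt_Qbar]⟩
  have hbound : q z * deriv (deriv c) ξ ≤ 4 * deriv c (2 * s) :=
    calc q z * deriv (deriv c) ξ ≤ ξ * deriv (deriv c) ξ := by gcongr; exact hξ.1.le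
      _ ≤ 4 * deriv c (2 * ξ) := hA2.mul_deriv_deriv_le hA1 hξ0 (by linarith [hξ.2])
      _ ≤ 4 * deriv c (2 * s) := by
          gcongr
          exact hA1.strictMonoOn_deriv.monotoneOn (by simp only [mem_Ioi]; linarith)
            (by simp only [mem_Ioi]; linarith) (by linarith [hξ.2])
  rw [← hmvt]
  nlinarith [sub_pos.mpr hts]

theorem exists_floor (hA1 : Assumption1 c Qbar qbar) (hA2 : Assumption2 c qbar)
    (hq : IsArgmaxSelection c qbar q) {K : ℝ} (hK : 0 < K) :
    ∃ ε, 0 < ε ∧ ε ≤ K ∧ ∀ z < ε, q z < q ε ∧ (ε - z) * q z ≤ K * (q ε - q z) := by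
  have hsmall : ∀ᶠ t in 𝓝[>] 0, deriv c t < K / 4 ∧ t < qbar :=
    (hA1.tendsto_deriv_zero.eventually (gt_mem_nhds (by positivity))).and
      (nhdsWithin_le_nhds (gt_mem_nhds hA1.qbar_pos))
  obtain ⟨t, ⟨hct, htq⟩, ht : 0 < t⟩ := (hsmall.and self_mem_nhdsWithin).exists
  have hs : 0 < t / 2 := by positivity
  have hct' : deriv c (t / 2) < deriv c t :=
    hA1.strictMonoOn_deriv hs ht (by linarith)
  have hqε : q (deriv c (t / 2)) = t / 2 := hq.apply_deriv hA1 hs (by linarith)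
  refine ⟨deriv c (t / 2), hA1.deriv_pos hs, by linarith, fun z hz => ⟨?_, ?_⟩⟩
  · rw [hqε]
    exact hq.lt_of_lt_deriv hA1 hs (by linarith) hz
  · have h := hq.sub_mul_le_of_lt_deriv hA1 hA2 hs (by linarith) hz
    rw [mul_div_cancel₀ t two_ne_zero] at h
    rw [hqε]
    refine h.trans (mul_le_mul_of_nonneg_right (by linarith) ?_)
    linarith [hq.lt_of_lt_deriv hA1 hs (by linarith) hz]

end IsArgmaxSelection

namespace MemPhi

theorem intervalIntegrable (hφ : MemPhi φ) {u v : ℝ} (hu : 0 ≤ u) (huv : u ≤ v) (hv : v ≤ 1) :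
    IntervalIntegrable φ volume u v :=
  MonotoneOn.intervalIntegrable <| uIcc_of_le huv ▸ hφ.2.1.mono (Icc_subset_Icc hu hv)

theorem intervalIntegrable_comp (hφ : MemPhi φ) {g : ℝ → ℝ} (hg : Monotone g) :
    IntervalIntegrable (fun u => g (φ u)) volume 0 1 :=
  MonotoneOn.intervalIntegrable <| uIcc_of_le (zero_le_one' ℝ) ▸ hg.comp_monotoneOn hφ.2.1

theorem max_const (hφ : MemPhi φ) {ε : ℝ} (hε : ε ≤ 1) : MemPhi fun u => max (φ u) ε :=
  ⟨fun u hu => ⟨(hφ.1 u hu).1.trans (le_max_left _ _), max_le (hφ.1 u hu).2 hε⟩,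
    fun _ hu _ hv huv => max_le_max (hφ.2.1 hu hv huv) le_rfl,
    fun u hu => (hφ.2.2 u hu).max continuousWithinAt_const⟩

theorem exists_lt_of_apply_zero_lt (hφ : MemPhi φ) {ε : ℝ} (h : φ 0 < ε) :
    ∃ u ∈ Ioo 0 1, φ u < ε := by
  have hev : ∀ᶠ u in 𝓝[>] 0, φ u < ε ∧ u < 1 :=
    (((hφ.2.2 0 ⟨le_rfl, one_pos⟩).mono Ioi_subset_Ici_self).eventually (gt_mem_nhds h)).and
      (nhdsWithin_le_nhds (gt_mem_nhds one_pos))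
  obtain ⟨u, ⟨hφu, hu1⟩, hu0⟩ := (hev.and self_mem_nhdsWithin).exists
  exact ⟨u, ⟨hu0, hu1⟩, hφu⟩

theorem Qfun_mem_Icc (hφ : MemPhi φ) {u : ℝ} (hu : u ∈ Ico 0 1) : Qfun φ u ∈ Icc 0 1 := by
  have h1u : 0 < 1 - u := sub_pos.mpr hu.2
  have hφIcc : ∀ x ∈ Icc u 1, φ x ∈ Icc 0 1 := fun x hx => hφ.1 x ⟨hu.1.trans hx.1, hx.2⟩
  rw [Qfun, if_pos hu.2]
  refine ⟨div_nonneg (intervalIntegral.integral_nonneg hu.2.le fun x hx => (hφIcc x hx).1) h1u.le,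
    (div_le_one h1u).mpr ?_⟩
  calc (∫ t in u..1, φ t) ≤ ∫ _ in u..1, (1 : ℝ) :=
        intervalIntegral.integral_mono_on hu.2.le (hφ.intervalIntegrable hu.1 hu.2.le le_rfl)
          intervalIntegrable_const fun x hx => (hφIcc x hx).2
    _ = 1 - u := by simp

theorem Qfun_le_Qfun (hφ : MemPhi φ) (hψ : MemPhi ψ) (hle : ∀ x ∈ Icc 0 1, φ x ≤ ψ x) {u : ℝ}
    (hu : u ∈ Ico 0 1) : Qfun φ u ≤ Qfun ψ u := by
  have h1u : 0 < 1 - u := sub_pos.mpr hu.2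
  rw [Qfun, Qfun, if_pos hu.2, if_pos hu.2]
  gcongr
  exact intervalIntegral.integral_mono_on hu.2.le (hφ.intervalIntegrable hu.1 hu.2.le le_rfl)
    (hψ.intervalIntegrable hu.1 hu.2.le le_rfl) fun x hx => hle x ⟨hu.1.trans hx.1, hx.2⟩

theorem one_sub_le_Qfun (hφ : MemPhi φ) {b : ℝ} (hb : b ∈ Icc 0 1)
    (htop : ∀ x ∈ Icc b 1, φ x = 1) {u : ℝ} (hu : u ∈ Ico 0 1) : 1 - b ≤ Qfun φ u := by
  set m := max u b
  have hum : u ≤ m := le_max_left _ _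
  have hm1 : m ≤ 1 := max_le hu.2.le hb.2
  have hsplit := intervalIntegral.integral_add_adjacent_intervals
    (hφ.intervalIntegrable hu.1 hum hm1) (hφ.intervalIntegrable (hu.1.trans hum) hm1 le_rfl)
  have hleft : 0 ≤ ∫ t in u..m, φ t := intervalIntegral.integral_nonneg hum
    fun x hx => (hφ.1 x ⟨hu.1.trans hx.1, hx.2.trans hm1⟩).1
  have hright : (∫ t in m..1, φ t) = 1 - m := by
    rw [intervalIntegral.integral_congr (g := fun _ => (1 : ℝ)) fun x hx =>
      htop x ⟨(le_max_right u b).trans (uIcc_of_le hm1 ▸ hx).1, (uIcc_of_le hm1 ▸ hx).2⟩]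
    simp
  have hm : (1 - b) * (1 - u) ≤ 1 - m := by
    rcases le_total u b with h | h
    · rw [show m = b from max_eq_right h]; nlinarith [mul_nonneg (sub_nonneg.mpr hb.2) hu.1]
    · rw [show m = u from max_eq_left h]; nlinarith [hu.2.le, hb.1]
  rw [Qfun, if_pos hu.2, le_div_iff₀ (sub_pos.mpr hu.2)]
  linarith

theorem continuousOn_Qfun (hφ : MemPhi φ) : ContinuousOn (Qfun φ) (Ico 0 1) := by
  have hint : IntegrableOn φ (uIcc 0 1) volume := by
    rw [uIcc_of_le zero_le_one, ← intervalIntegrable_iff_integrableOn_Icc_of_le zero_le_one]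
    exact hφ.intervalIntegrable le_rfl zero_le_one le_rfl
  have hprim : ContinuousOn (fun x => ∫ t in x..1, φ t) (Icc 0 1) := by
    simpa only [uIcc_of_le zero_le_one] using
      intervalIntegral.continuousOn_primitive_interval_left hint
  refine ((hprim.mono Ico_subset_Icc_self).div (continuousOn_const.sub continuousOn_id)
    fun x hx => (sub_pos.mpr hx.2).ne').congr fun x hx => if_pos hx.2

theorem intervalIntegrable_CS_integrand (hq : IsArgmaxSelection c qbar q) (hφ : MemPhi φ) :
    IntervalIntegrable (fun u => (Qfun φ u - φ u) * q (φ u)) volume 0 1 := by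
  rw [intervalIntegrable_iff_integrableOn_Ioo_of_le zero_le_one]
  have hres : volume.restrict (Ioo (0:ℝ) 1) ≤ volume.restrict (Ioc 0 1) :=
    Measure.restrict_mono Ioo_subset_Ioc_self le_rfl
  have hφm : AEStronglyMeasurable φ (volume.restrict (Ioo 0 1)) :=
    (hφ.intervalIntegrable le_rfl zero_le_one le_rfl).1.aestronglyMeasurable.mono_measure hres
  have hQm : AEStronglyMeasurable (Qfun φ) (volume.restrict (Ioo 0 1)) :=
    (hφ.continuousOn_Qfun.mono Ioo_subset_Ico_self).aestronglyMeasurable measurableSet_Ioo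
  refine Integrable.mono' (g := fun _ => qbar) (integrableOn_const measure_Ioo_lt_top.ne)
    ((hQm.sub hφm).mul
      ((hφ.intervalIntegrable_comp hq.monotone).1.aestronglyMeasurable.mono_measure hres)) ?_
  filter_upwards [ae_restrict_mem measurableSet_Ioo] with x hx
  have hQ := hφ.Qfun_mem_Icc ⟨hx.1.le, hx.2⟩
  have hφx := hφ.1 x ⟨hx.1.le, hx.2.le⟩
  have hqx := (hq (φ x)).1
  rw [norm_mul, Real.norm_eq_abs, Real.norm_eq_abs, abs_of_nonneg hqx.1]
  exact (mul_le_of_le_one_left hqx.1 (abs_le.mpr ⟨by linarith [hQ.1, hφx.2],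
    by linarith [hQ.2, hφx.1]⟩)).trans hqx.2

end MemPhi

theorem intervalIntegral_pos_of_nonneg_of_le {f : ℝ → ℝ} {a u b m : ℝ}
    (hf : IntervalIntegrable f volume a b) (hau : a < u) (hub : u ≤ b) (hm : 0 < m)
    (hnonneg : ∀ x ∈ Ioo a b, 0 ≤ f x) (hle : ∀ x ∈ Ioo a u, m ≤ f x) :
    0 < ∫ x in a..b, f x := by
  have hu : u ∈ uIcc a b := uIcc_of_le (hau.le.trans hub) ▸ ⟨hau.le, hub⟩
  have hleft := hf.mono_set (uIcc_subset_uIcc_left hu)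
  have hright := hf.mono_set (uIcc_subset_uIcc_right hu)
  have h1 : m * (u - a) ≤ ∫ x in a..u, f x := by
    simpa [mul_comm] using
      intervalIntegral.integral_mono_on_of_le_Ioo hau.le intervalIntegrable_const hleft hle
  have h2 : 0 ≤ ∫ x in u..b, f x := by
    simpa using intervalIntegral.integral_mono_on_of_le_Ioo hub intervalIntegrable_const hright
      fun x hx => hnonneg x ⟨hau.trans hx.1, hx.2⟩
  rw [← intervalIntegral.integral_add_adjacent_intervals hleft hright]
  nlinarith [mul_pos hm (sub_pos.mpr hau)]

noncomputable def Jintegrand (c q : ℝ → ℝ) (k : ℝ) (φ : ℝ → ℝ) (u : ℝ) : ℝ :=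
  k * ((Qfun φ u - φ u) * q (φ u)) + (1 - k) * piFun c q (φ u)

theorem MemPhi.intervalIntegrable_Jintegrand (hq : IsArgmaxSelection c qbar q) (hφ : MemPhi φ)
    (k : ℝ) : IntervalIntegrable (Jintegrand c q k φ) volume 0 1 :=
  ((hφ.intervalIntegrable_CS_integrand hq).const_mul k).add
    ((hφ.intervalIntegrable_comp hq.monotone_piFun).const_mul (1 - k))

theorem MemPhi.Jfun_eq_integral (hq : IsArgmaxSelection c qbar q) (hφ : MemPhi φ) (k : ℝ) :
    Jfun c q k φ = ∫ u in (0:ℝ)..1, Jintegrand c q k φ u := by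
  unfold Jfun CS Profit Jintegrand
  rw [intervalIntegral.integral_add ((hφ.intervalIntegrable_CS_integrand hq).const_mul k)
    ((hφ.intervalIntegrable_comp hq.monotone_piFun).const_mul (1 - k)),
    intervalIntegral.integral_const_mul, intervalIntegral.integral_const_mul]

theorem floor_gain_le {k b ε K z Qφ Qψ qz qε πz πε : ℝ} (hk : k ∈ Ioc (1/2) 1)
    (hqz : 0 ≤ qz) (hqzε : qz ≤ qε) (hQφ : 1 - b ≤ Qφ) (hQψ : Qφ ≤ Qψ) (hε : ε ≤ (1 - b) / 2)
    (hπ : (ε - z) * qz ≤ πε - πz) (hslack : (ε - z) * qz ≤ K * (qε - qz))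
    (hK : (2 * k - 1) * K ≤ k * (1 - b) / 4) :
    k * (1 - b) / 4 * (qε - qz) ≤
      (k * ((Qψ - ε) * qε) + (1 - k) * πε) - (k * ((Qφ - z) * qz) + (1 - k) * πz) := by
  obtain ⟨hk1, hk2⟩ := hk
  nlinarith [mul_le_mul_of_nonneg_left hπ (sub_nonneg.mpr hk2),
    mul_le_mul_of_nonneg_left hslack (by linarith : (0:ℝ) ≤ 2 * k - 1),
    mul_le_mul_of_nonneg_right hK (sub_nonneg.mpr hqzε),
    mul_nonneg (mul_nonneg (by linarith : (0:ℝ) ≤ k) (sub_nonneg.mpr hQψ)) (hqz.trans hqzε),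
    mul_nonneg (mul_nonneg (by linarith : (0:ℝ) ≤ k) (by linarith : 0 ≤ Qφ - ε - (1 - b) / 2))
      (sub_nonneg.mpr hqzε)]

theorem MemPhi.Jintegrand_max_sub_ge (hq : IsArgmaxSelection c qbar q) {k : ℝ}
    (hk : k ∈ Ioc (1/2) 1) (hφ : MemPhi φ) {b : ℝ} (hb : b ∈ Icc 0 1)
    (htop : ∀ x ∈ Icc b 1, φ x = 1) {ε K : ℝ} (hε : ε ≤ (1 - b) / 2)
    (hK : (2 * k - 1) * K ≤ k * (1 - b) / 4)
    (hslack : ∀ z < ε, (ε - z) * q z ≤ K * (q ε - q z)) {u : ℝ} (hu : u ∈ Ico 0 1) :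
    k * (1 - b) / 4 * (q ε - q (min (φ u) ε)) ≤
      Jintegrand c q k (fun x => max (φ x) ε) u - Jintegrand c q k φ u := by
  have hQ : Qfun φ u ≤ Qfun (fun x => max (φ x) ε) u :=
    hφ.Qfun_le_Qfun (hφ.max_const (by linarith [hb.1])) (fun x _ => le_max_left _ _) hu
  simp only [Jintegrand]
  rcases le_or_gt ε (φ u) with h | h
  · rw [min_eq_right h, max_eq_left h, sub_self, mul_zero]
    nlinarith [mul_nonneg (mul_nonneg (by linarith [hk.1] : (0:ℝ) ≤ k) (sub_nonneg.mpr hQ))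
      (hq (φ u)).1.1]
  · rw [min_eq_left h.le, max_eq_right h.le]
    exact floor_gain_le hk (hq _).1.1 (hq.monotone h.le) (hφ.one_sub_le_Qfun hb htop hu) hQ hε
      (hq.sub_mul_le_piFun_sub _ _) (hslack _ h) hK

theorem MemPhi.Jfun_lt_Jfun_max (hq : IsArgmaxSelection c qbar q) {k : ℝ}
    (hk : k ∈ Ioc (1/2) 1) (hφ : MemPhi φ) {b : ℝ} (hb : b ∈ Icc 0 1)
    (htop : ∀ x ∈ Icc b 1, φ x = 1) {ε K : ℝ} (hε : ε ≤ (1 - b) / 2) (hφ0 : φ 0 < ε)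
    (hK : (2 * k - 1) * K ≤ k * (1 - b) / 4)
    (hfloor : ∀ z < ε, q z < q ε ∧ (ε - z) * q z ≤ K * (q ε - q z)) :
    Jfun c q k φ < Jfun c q k fun x => max (φ x) ε := by
  have hε0 : 0 < ε := (hφ.1 0 ⟨le_rfl, zero_le_one⟩).1.trans_lt hφ0
  have hκ : 0 < k * (1 - b) / 4 :=
    div_pos (mul_pos (by linarith [hk.1]) (by linarith)) four_pos
  have hψ : MemPhi fun x => max (φ x) ε := hφ.max_const (by linarith [hb.1])
  have hgain := fun u (hu : u ∈ Ico 0 1) =>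
    hφ.Jintegrand_max_sub_ge hq hk hb htop hε hK (fun z hz => (hfloor z hz).2) hu
  obtain ⟨u₀, hu₀, hφu₀⟩ := hφ.exists_lt_of_apply_zero_lt hφ0
  have hnonneg : ∀ x ∈ Ioo 0 1, 0 ≤ k * (1 - b) / 4 * (q ε - q (min (φ x) ε)) :=
    fun x _ => mul_nonneg hκ.le (sub_nonneg.mpr (hq.monotone (min_le_right _ _)))
  have hwindow : ∀ x ∈ Ioo 0 u₀,
      k * (1 - b) / 4 * (q ε - q (φ u₀)) ≤ k * (1 - b) / 4 * (q ε - q (min (φ x) ε)) := by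
    intro x hx
    have hφx : φ x ≤ φ u₀ :=
      hφ.2.1 ⟨hx.1.le, (hx.2.trans hu₀.2).le⟩ ⟨hu₀.1.le, hu₀.2.le⟩ hx.2.le
    gcongr
    exact hq.monotone ((min_le_left _ _).trans hφx)
  have hpos := intervalIntegral_pos_of_nonneg_of_le
    ((hψ.intervalIntegrable_Jintegrand hq k).sub (hφ.intervalIntegrable_Jintegrand hq k))
    hu₀.1 hu₀.2.le (mul_pos hκ (sub_pos.mpr (hfloor _ hφu₀).1))
    (fun x hx => (hnonneg x hx).trans (hgain x ⟨hx.1.le, hx.2⟩))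
    (fun x hx => (hwindow x hx).trans (hgain x ⟨hx.1.le, hx.2.trans hu₀.2⟩))
  rw [intervalIntegral.integral_sub (hψ.intervalIntegrable_Jintegrand hq k)
    (hφ.intervalIntegrable_Jintegrand hq k), ← hψ.Jfun_eq_integral hq,
    ← hφ.Jfun_eq_integral hq] at hpos
  linarith

end

/-- For `k ∈ (1/2,1]`, under Assumptions 1 and 2, any maximizer `φ*` of
`J_k` over `Φ` with cutoff `b ∈ (0,1)` (i.e. `φ* ≡ 1` on `[b,1]`) satisfies
`φ*(0) > 0`. -/
theorem endpoint_positivity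
    (c : ℝ → ℝ) (Qbar qbar : ℝ) (q : ℝ → ℝ)
    (hA1 : Assumption1 c Qbar qbar)
    (hA2 : Assumption2 c qbar)
    (hq : IsArgmaxSelection c qbar q)
    (k : ℝ) (hk : k ∈ Set.Ioc (1/2 : ℝ) 1)
    (φ : ℝ → ℝ) (hφ : MemPhi φ)
    (hmax : ∀ ψ : ℝ → ℝ, MemPhi ψ → Jfun c q k ψ ≤ Jfun c q k φ)
    (b : ℝ) (hb : b ∈ Set.Ioo (0:ℝ) 1)
    (htop : ∀ u ∈ Set.Icc b 1, φ u = 1) :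
    0 < φ 0 := by
  by_contra! hφ0
  have h2k : 0 < 2 * k - 1 := by linarith [hk.1]
  set K := min ((1 - b) / 2) (k * (1 - b) / 4 / (2 * k - 1))
  have hK0 : 0 < K :=
    lt_min (by linarith [hb.2]) (div_pos (by nlinarith [hk.1, hb.2]) h2k)
  have hK : (2 * k - 1) * K ≤ k * (1 - b) / 4 :=
    (mul_le_mul_of_nonneg_left (min_le_right _ _) h2k.le).trans_eq (mul_div_cancel₀ _ h2k.ne')
  obtain ⟨ε, hε0, hεK, hfloor⟩ := hq.exists_floor hA1 hA2 hK0
  have hεb : ε ≤ (1 - b) / 2 := hεK.trans (min_le_left _ _)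
  exact (hφ.Jfun_lt_Jfun_max hq hk (Ioo_subset_Icc_self hb) htop hεb (hφ0.trans_lt hε0) hK
    hfloor).not_ge (hmax _ (hφ.max_const (by linarith [hb.1])))

end Screening
end
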